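/- arXiv:2101.04940 — 2 statements merged into one kernel-verified Lean document; each statement's English description precedes it below -/
import Mathlib

section
/- Let E be a finite-dimensional real inner product space and let S and Sᶜ be linear subspaces of E with S ∩ Sᶜ = {0} and S + Sᶜ = E, with orthogonal projections π_S and π_{Sᶜ}. Let b ∈ S and c ∈ Sᶜ, and suppose u, v ∈ E satisfy u − π_S(π_{Sᶜ}(u)) = b − π_S(c) and v − π_{Sᶜ}(π_S(v)) = c − π_{Sᶜ}(b). Then π_S(u + v) = b and π_{Sᶜ}(u + v) = c. (In other words, the recovery operator R(b,c) := (Id − π_S π_{Sᶜ})⁻¹(b − π_S c) + (Id − π_{Sᶜ} π_S)⁻¹(c − π_{Sᶜ} b) satisfies π_S(R(b,c)) = b and π_{Sᶜ}(R(b,c)) = c.) -/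
/-!
The equation for `u` exhibits `u` as a sum of elements of `S`, so `π_S (u + v) = u + π_S v`.
Unfolding with both equations shows that the defect `p := u + π_S v - b` satisfies
`π_S (π_Sc p) = p`. Orthogonal projections do not increase norms, so
`‖p‖ = ‖π_S (π_Sc p)‖ ≤ ‖π_Sc p‖ ≤ ‖p‖` forces `p ∈ S ⊓ Sc = ⊥`. The claim for `π_Sc` is the
same statement with the roles of `S` and `Sc` exchanged.
-/

namespace Submodule

variable {𝕜 E : Type*} [RCLike 𝕜] [NormedAddCommGroup E] [InnerProductSpace 𝕜 E]
  {K L : Submodule 𝕜 E} [K.HasOrthogonalProjection] [L.HasOrthogonalProjection]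

theorem mem_inf_of_starProjection_starProjection_eq {x : E}
    (h : K.starProjection (L.starProjection x) = x) : x ∈ K ⊓ L := by
  refine ⟨h ▸ K.starProjection_apply_mem _, (L.mem_iff_norm_starProjection x).2 ?_⟩
  refine le_antisymm (L.norm_starProjection_apply_le x) ?_
  calc ‖x‖ = ‖K.starProjection (L.starProjection x)‖ := by rw [h]
    _ ≤ ‖L.starProjection x‖ := K.norm_starProjection_apply_le _

theorem eq_zero_of_starProjection_starProjection_eq (hKL : K ⊓ L = ⊥) {x : E}
    (h : K.starProjection (L.starProjection x) = x) : x = 0 := by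
  simpa [hKL] using mem_inf_of_starProjection_starProjection_eq h

theorem starProjection_add_eq_of_sub_starProjection_starProjection_eq (hKL : K ⊓ L = ⊥)
    {b c u v : E} (hb : b ∈ K)
    (hu : u - K.starProjection (L.starProjection u) = b - K.starProjection c)
    (hv : v - L.starProjection (K.starProjection v) = c - L.starProjection b) :
    K.starProjection (u + v) = b := by
  have huK : u ∈ K := by
    rw [← sub_add_cancel u (K.starProjection _), hu]
    exact K.add_mem (K.sub_mem hb (K.starProjection_apply_mem c)) (K.starProjection_apply_mem _)
  have hLp : L.starProjection (u + K.starProjection v - b) = L.starProjection u + v - c := by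
    rw [map_sub, map_add]
    linear_combination (norm := module) -hv
  have hfix : K.starProjection (L.starProjection (u + K.starProjection v - b))
      = u + K.starProjection v - b := by
    rw [hLp, map_sub, map_add]
    linear_combination (norm := module) -hu
  rw [map_add, K.starProjection_eq_self_iff.2 huK]
  exact sub_eq_zero.1 (eq_zero_of_starProjection_starProjection_eq hKL hfix)

end Submodule

theorem recovery_operator_projections_general
    {E : Type*} [NormedAddCommGroup E] [InnerProductSpace ℝ E] [FiniteDimensional ℝ E]
    (S Sc : Submodule ℝ E) (hinf : S ⊓ Sc = ⊥)
    (b c u v : E) (hb : b ∈ S) (hc : c ∈ Sc)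
    (hu : u - (Submodule.orthogonalProjection S ((Submodule.orthogonalProjection Sc u : E)) : E)
        = b - (Submodule.orthogonalProjection S c : E))
    (hv : v - (Submodule.orthogonalProjection Sc ((Submodule.orthogonalProjection S v : E)) : E)
        = c - (Submodule.orthogonalProjection Sc b : E)) :
    (Submodule.orthogonalProjection S (u + v) : E) = b ∧ (Submodule.orthogonalProjection Sc (u + v) : E) = c := by
  refine ⟨S.starProjection_add_eq_of_sub_starProjection_starProjection_eq hinf hb hu hv, ?_⟩
  rw [add_comm]
  exact Sc.starProjection_add_eq_of_sub_starProjection_starProjection_eq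
    (inf_comm S Sc ▸ hinf) hc hv hu

/-- Let `E` be a finite-dimensional real inner product space, `S`, `Sc`
subspaces with `S ⊓ Sc = ⊥`, `S ⊔ Sc = ⊤`, with orthogonal projections `π_S`, `π_Sc`.
Let `b ∈ S`, `c ∈ Sc`, and suppose `u, v ∈ E` satisfy `u − π_S (π_Sc u) = b − π_S c` and
`v − π_Sc (π_S v) = c − π_Sc b`. Then `π_S (u + v) = b` and `π_Sc (u + v) = c`.
(This is property (2.14) of the recovery operator.) -/
theorem recovery_operator_projections
    {E : Type*} [NormedAddCommGroup E] [InnerProductSpace ℝ E] [FiniteDimensional ℝ E]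
    (S Sc : Submodule ℝ E) (hinf : S ⊓ Sc = ⊥) (hsup : S ⊔ Sc = ⊤)
    (b c u v : E) (hb : b ∈ S) (hc : c ∈ Sc)
    (hu : u - (Submodule.orthogonalProjection S ((Submodule.orthogonalProjection Sc u : E)) : E)
        = b - (Submodule.orthogonalProjection S c : E))
    (hv : v - (Submodule.orthogonalProjection Sc ((Submodule.orthogonalProjection S v : E)) : E)
        = c - (Submodule.orthogonalProjection Sc b : E)) :
    (Submodule.orthogonalProjection S (u + v) : E) = b ∧ (Submodule.orthogonalProjection Sc (u + v) : E) = c :=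
  recovery_operator_projections_general S Sc hinf b c u v hb hc hu hv
end

section
/- For every integer ℓ ≥ 0 and every real ρ with 0 < ρ < 1 there exists a real C > 0, depending only on ℓ and ρ, with the following property: for every Lebesgue-measurable set T ⊆ ℝ² with B(0,ρ) ⊆ T ⊆ B(0,1) and every real polynomial q in two variables of total degree at most ℓ+1 satisfying ∫_T q(x) dx = 0, one has ∫_T q(x)² dx ≤ C² ∫_T ‖∇q(x)‖² dx. (This is the normalized form of the estimate ‖(rot-grad)⁻¹‖ ≲ h_F for the isomorphism from zero-mean polynomials of degree ≤ ℓ+1 on a face F onto the rotated-gradient space, since the rotated gradient has the same pointwise norm as the gradient.) -/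
open MvPolynomial MeasureTheory

/-- The gradient of a polynomial in two variables, evaluated at a point of `ℝ²`. -/
noncomputable def polyGrad2 (q : MvPolynomial (Fin 2) ℝ) (x : EuclideanSpace ℝ (Fin 2)) :
    EuclideanSpace ℝ (Fin 2) :=
  (WithLp.equiv 2 (Fin 2 → ℝ)).symm fun i => eval (fun j => x j) (pderiv i q)

/-!
Since `∫_T q = 0`, the constant `0` minimises `a ↦ ∫_T (q - a)²`, so `∫_T q²` is at most
`∫_T p²` for `p = q - a`, where `a` is the mean of `q` over `B(0,ρ)`; enlarging `T` to `B(0,1)`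
increases this, while shrinking `T` to `B(0,ρ)` decreases `∫ ‖∇q‖² = ∫ ‖∇p‖²`. It remains to bound
`‖p‖_{L²(B(0,1))}` by `‖∇p‖_{L²(B(0,ρ))}` for polynomials `p` of degree `≤ ℓ+1` with zero mean on
`B(0,ρ)`. On this finite-dimensional space, `p ↦ (∇p, ∫_{B(0,ρ)} p) ∈ L²(B(0,ρ); ℝ²) × ℝ` is
injective (a polynomial whose gradient vanishes on a ball is constant), so it dominates every
linear map into a normed space, in particular `p ↦ p ∈ L²(B(0,1))`.
-/

open Function Metric Set Bornology

theorem LinearMap.exists_norm_le_mul_norm_of_injective {𝕜 E F H : Type*}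
    [NontriviallyNormedField 𝕜] [CompleteSpace 𝕜] [AddCommGroup E] [Module 𝕜 E]
    [FiniteDimensional 𝕜 E] [NormedAddCommGroup F] [NormedSpace 𝕜 F] [NormedAddCommGroup H]
    [NormedSpace 𝕜 H] (A : E →ₗ[𝕜] F) {G : E →ₗ[𝕜] H} (hG : Injective G) :
    ∃ C, 0 < C ∧ ∀ v, ‖A v‖ ≤ C * ‖G v‖ := by
  let e := LinearEquiv.ofInjective G hG
  obtain ⟨C, hC, hbound⟩ := (A ∘ₗ e.symm.toLinearMap).toContinuousLinearMap.bound
  refine ⟨C, hC, fun v => ?_⟩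
  simpa [e] using hbound (e v)

section L2

variable {X E M : Type*} [MeasurableSpace X] {μ : Measure X} [NormedAddCommGroup E]
  [NormedSpace ℝ E] [AddCommGroup M] [Module ℝ M]

noncomputable def LinearMap.toL2 (Φ : M →ₗ[ℝ] X → E) (hΦ : ∀ m, MemLp (Φ m) 2 μ) :
    M →ₗ[ℝ] Lp E 2 μ where
  toFun m := (hΦ m).toLp (Φ m)
  map_add' m n := by
    rw [← MemLp.toLp_add, MemLp.toLp_eq_toLp_iff, map_add]
  map_smul' c m := by
    rw [RingHom.id_apply, ← MemLp.toLp_const_smul, MemLp.toLp_eq_toLp_iff, map_smul]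

noncomputable def LinearMap.integral (Φ : M →ₗ[ℝ] X → E) (hΦ : ∀ m, Integrable (Φ m) μ) :
    M →ₗ[ℝ] E where
  toFun m := ∫ x, Φ m x ∂μ
  map_add' m n := by simp only [map_add, Pi.add_apply, integral_add (hΦ m) (hΦ n)]
  map_smul' c m := by simp only [map_smul, Pi.smul_apply, integral_smul, RingHom.id_apply]

theorem LinearMap.norm_toL2_sq {F : Type*} [NormedAddCommGroup F] [InnerProductSpace ℝ F]
    (Φ : M →ₗ[ℝ] X → F) (hΦ : ∀ m, MemLp (Φ m) 2 μ) (m : M) :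
    ‖Φ.toL2 hΦ m‖ ^ 2 = ∫ x, ‖Φ m x‖ ^ 2 ∂μ := by
  rw [← real_inner_self_eq_norm_sq, L2.inner_def]
  refine integral_congr_ae ?_
  filter_upwards [(hΦ m).coeFn_toLp] with x hx
  rw [real_inner_self_eq_norm_sq]
  exact congrArg (‖·‖ ^ 2) hx

theorem LinearMap.toL2_eq_zero_iff (Φ : M →ₗ[ℝ] X → E) (hΦ : ∀ m, MemLp (Φ m) 2 μ) (m : M) :
    Φ.toL2 hΦ m = 0 ↔ Φ m =ᵐ[μ] 0 := by
  show (hΦ m).toLp (Φ m) = 0 ↔ _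
  rw [← MemLp.toLp_zero, MemLp.toLp_eq_toLp_iff]
  exact MemLp.zero

end L2

theorem Continuous.memLp_restrict_of_isBounded {X E : Type*} [MetricSpace X] [ProperSpace X]
    [MeasurableSpace X] [OpensMeasurableSpace X] {μ : Measure X} [IsFiniteMeasureOnCompacts μ]
    [NormedAddCommGroup E] {f : X → E} (hf : Continuous f) {s : Set X} (hs : IsBounded s)
    (p : ENNReal) : MemLp f p (μ.restrict s) := by
  have hK := hs.isCompact_closure
  have : IsFiniteMeasure (μ.restrict (closure s)) :=
    isFiniteMeasure_restrict.2 hK.measure_lt_top.ne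
  obtain ⟨C, hC⟩ := hK.exists_bound_of_continuousOn hf.continuousOn
  refine (MemLp.of_bound hf.aestronglyMeasurable C ?_).mono_measure
    (Measure.restrict_mono subset_closure le_rfl)
  exact (ae_restrict_iff' isClosed_closure.measurableSet).2 (.of_forall hC)

theorem Continuous.integrableOn_of_isBounded {X E : Type*} [MetricSpace X] [ProperSpace X]
    [MeasurableSpace X] [OpensMeasurableSpace X] {μ : Measure X} [IsFiniteMeasureOnCompacts μ]
    [NormedAddCommGroup E] {f : X → E} (hf : Continuous f) {s : Set X} (hs : IsBounded s) :
    IntegrableOn f s μ :=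
  memLp_one_iff_integrable.1 (hf.memLp_restrict_of_isBounded hs 1)

namespace MvPolynomial

theorem continuous_eval_euclidean {ι : Type*} [Fintype ι] (p : MvPolynomial ι ℝ) :
    Continuous fun x : EuclideanSpace ℝ ι => eval (fun j => x j) p :=
  (continuous_eval p).comp (EuclideanSpace.equiv ι ℝ).continuous

theorem eq_zero_of_eval_eq_zero_on_isOpen {ι : Type*} [Fintype ι] {p : MvPolynomial ι ℝ}
    {U : Set (EuclideanSpace ℝ ι)} (hU : IsOpen U) (hne : U.Nonempty)
    (h : ∀ x ∈ U, eval (fun j => x j) p = 0) : p = 0 := by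
  obtain ⟨x₀, hx₀⟩ := hne
  have han : AnalyticOnNhd ℝ (fun x : EuclideanSpace ℝ ι => eval (fun j => x j) p) univ :=
    AnalyticOnNhd.eval_continuousLinearMap (EuclideanSpace.equiv ι ℝ).toContinuousLinearMap p
  have hzero := han.eqOn_zero_of_preconnected_of_eventuallyEq_zero isPreconnected_univ
    (mem_univ x₀) (Filter.eventually_of_mem (hU.mem_nhds hx₀) h)
  refine MvPolynomial.funext fun x => ?_
  simpa using hzero (mem_univ ((EuclideanSpace.equiv ι ℝ).symm x))

theorem eq_C_of_pderiv_eq_zero {σ R : Type*} [CommRing R] [NoZeroDivisors R] [CharZero R]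
    {p : MvPolynomial σ R} (h : ∀ i, pderiv i p = 0) : p = C (coeff 0 p) := by
  classical
  ext m
  rw [coeff_C]
  split_ifs with hm
  · rw [hm]
  obtain ⟨i, hi⟩ : ∃ i, m i ≠ 0 := by
    by_contra! h0
    exact hm (Finsupp.ext h0).symm
  have hle : Finsupp.single i 1 ≤ m := Finsupp.single_le_iff.2 (Nat.one_le_iff_ne_zero.2 hi)
  have := coeff_pderiv (i := i) p (m - Finsupp.single i 1)
  rw [h i, tsub_add_cancel_of_le hle, coeff_zero] at this
  exact (mul_eq_zero.1 this.symm).resolve_right (Nat.cast_add_one_ne_zero _)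

end MvPolynomial

local notation "ℝ²" => EuclideanSpace ℝ (Fin 2)

noncomputable def polyEvalₗ : MvPolynomial (Fin 2) ℝ →ₗ[ℝ] ℝ² → ℝ where
  toFun q x := eval (fun j => x j) q
  map_add' p q := by ext x; simp
  map_smul' c q := by ext x; simp

noncomputable def polyGrad2ₗ : MvPolynomial (Fin 2) ℝ →ₗ[ℝ] ℝ² → ℝ² where
  toFun := polyGrad2
  map_add' p q := by ext x i; simp [polyGrad2]
  map_smul' c q := by ext x i; simp [polyGrad2]

theorem continuous_polyGrad2 (q : MvPolynomial (Fin 2) ℝ) : Continuous (polyGrad2 q) :=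
  (EuclideanSpace.equiv (Fin 2) ℝ).symm.continuous.comp
    (continuous_pi fun i => continuous_eval_euclidean (pderiv i q))

theorem polyGrad2_sub_C (q : MvPolynomial (Fin 2) ℝ) (a : ℝ) :
    polyGrad2 (q - C a) = polyGrad2 q := by
  ext x i; simp [polyGrad2]

theorem eq_zero_of_polyGrad2_eqOn_zero {ρ : ℝ} (hρ : 0 < ρ) {q : MvPolynomial (Fin 2) ℝ}
    (hgrad : EqOn (polyGrad2 q) 0 (ball (0 : ℝ²) ρ))
    (hmean : ∫ x in ball (0 : ℝ²) ρ, eval (fun j => x j) q = 0) : q = 0 := by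
  have hpderiv (i : Fin 2) : pderiv i q = 0 :=
    eq_zero_of_eval_eq_zero_on_isOpen isOpen_ball ⟨0, mem_ball_self hρ⟩
      fun x hx => congrArg (· i) (hgrad hx)
  rw [eq_C_of_pderiv_eq_zero hpderiv] at hmean ⊢
  have hvol : volume.real (ball (0 : ℝ²) ρ) ≠ 0 :=
    (measureReal_ne_zero_iff measure_ball_lt_top.ne).2 (measure_ball_pos volume 0 hρ).ne'
  simpa [hvol] using hmean

theorem integral_sq_le_integral_sub_const_sq {X : Type*} [MeasurableSpace X] {μ : Measure X}
    [IsFiniteMeasure μ] {f : X → ℝ} (hf : MemLp f 2 μ) (hf0 : ∫ x, f x ∂μ = 0) (a : ℝ) :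
    ∫ x, f x ^ 2 ∂μ ≤ ∫ x, (f x - a) ^ 2 ∂μ := by
  have hexpand : (fun x => (f x - a) ^ 2) = fun x => f x ^ 2 + (-(2 * a) * f x + a ^ 2) := by
    ext x; ring
  have hf1 := hf.integrable one_le_two
  have hrest : Integrable (fun x => -(2 * a) * f x + a ^ 2) μ :=
    (hf1.const_mul _).add (integrable_const _)
  rw [hexpand, integral_add hf.integrable_sq hrest,
    integral_add (hf1.const_mul _) (integrable_const _), integral_const_mul, hf0, integral_const]
  have : 0 ≤ μ.real univ • a ^ 2 := by positivity
  linarith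

theorem exists_integral_sq_le_integral_polyGrad2_sq (m : ℕ) {ρ : ℝ} (hρ : 0 < ρ) (R : ℝ) :
    ∃ C, 0 < C ∧ ∀ p : MvPolynomial (Fin 2) ℝ, p.totalDegree ≤ m →
      ∫ x in ball (0 : ℝ²) ρ, eval (fun j => x j) p = 0 →
      ∫ x in ball (0 : ℝ²) R, (eval (fun j => x j) p) ^ 2 ≤
        C ^ 2 * ∫ x in ball (0 : ℝ²) ρ, ‖polyGrad2 p x‖ ^ 2 := by
  have hEval (r : ℝ) (q : MvPolynomial (Fin 2) ℝ) :
      MemLp (polyEvalₗ q) 2 (volume.restrict (ball 0 r)) :=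
    (continuous_eval_euclidean q).memLp_restrict_of_isBounded isBounded_ball 2
  have hGrad (q : MvPolynomial (Fin 2) ℝ) :
      MemLp (polyGrad2ₗ q) 2 (volume.restrict (ball 0 ρ)) :=
    (continuous_polyGrad2 q).memLp_restrict_of_isBounded isBounded_ball 2
  have hInt (q : MvPolynomial (Fin 2) ℝ) : IntegrableOn (polyEvalₗ q) (ball 0 ρ) :=
    (continuous_eval_euclidean q).integrableOn_of_isBounded isBounded_ball
  let W := restrictTotalDegree (Fin 2) ℝ m
  let A := polyEvalₗ.toL2 (hEval R) ∘ₗ W.subtype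
  let G := ((polyGrad2ₗ.toL2 hGrad).prod (polyEvalₗ.integral hInt)) ∘ₗ W.subtype
  have hG : Injective G := by
    rw [injective_iff_map_eq_zero]
    rintro ⟨q, hq⟩ hGq
    change (polyGrad2ₗ.toL2 hGrad q, polyEvalₗ.integral hInt q) = 0 at hGq
    obtain ⟨hgrad, hmean⟩ := Prod.mk_eq_zero.1 hGq
    rw [LinearMap.toL2_eq_zero_iff] at hgrad
    replace hgrad := Measure.eqOn_open_of_ae_eq hgrad isOpen_ball
      (continuous_polyGrad2 q).continuousOn continuousOn_const
    exact Subtype.ext (eq_zero_of_polyGrad2_eqOn_zero hρ hgrad hmean)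
  obtain ⟨C, hC, hAG⟩ := A.exists_norm_le_mul_norm_of_injective hG
  refine ⟨C, hC, fun p hp hmean => ?_⟩
  have hnorm : ‖polyEvalₗ.toL2 (hEval R) p‖ ≤ C * ‖polyGrad2ₗ.toL2 hGrad p‖ := by
    have hGp : G ⟨p, (mem_restrictTotalDegree _ _ _).2 hp⟩ = (polyGrad2ₗ.toL2 hGrad p, 0) :=
      Prod.ext rfl hmean
    simpa [A, hGp, Prod.norm_def] using hAG ⟨p, (mem_restrictTotalDegree _ _ _).2 hp⟩
  calc ∫ x in ball (0 : ℝ²) R, (eval (fun j => x j) p) ^ 2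
      = ‖polyEvalₗ.toL2 (hEval R) p‖ ^ 2 := by
        simp only [LinearMap.norm_toL2_sq, Real.norm_eq_abs, sq_abs]; rfl
    _ ≤ (C * ‖polyGrad2ₗ.toL2 hGrad p‖) ^ 2 := by gcongr
    _ = C ^ 2 * ∫ x in ball (0 : ℝ²) ρ, ‖polyGrad2 p x‖ ^ 2 := by
        rw [mul_pow, LinearMap.norm_toL2_sq]; rfl

theorem rotgrad_inverse_bound_general (ℓ : ℕ) (ρ : ℝ) (hρ0 : 0 < ρ) :
    ∃ C : ℝ, 0 < C ∧
      ∀ T : Set (EuclideanSpace ℝ (Fin 2)), MeasurableSet T →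
        Metric.ball 0 ρ ⊆ T → T ⊆ Metric.ball 0 1 →
        ∀ q : MvPolynomial (Fin 2) ℝ, q.totalDegree ≤ ℓ + 1 →
          (∫ x in T, eval (fun j => x j) q) = 0 →
          (∫ x in T, (eval (fun j => x j) q) ^ 2) ≤
            C ^ 2 * ∫ x in T, ‖polyGrad2 q x‖ ^ 2 := by
  obtain ⟨K, hK, hball⟩ := exists_integral_sq_le_integral_polyGrad2_sq (ℓ + 1) hρ0 1
  refine ⟨K, hK, fun T _ hρT hT1 q hq hmean => ?_⟩
  have hT : IsBounded T := isBounded_ball.subset hT1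
  have : IsFiniteMeasure (volume.restrict T) := isFiniteMeasure_restrict.2 hT.measure_lt_top.ne
  have : IsFiniteMeasure (volume.restrict (ball (0 : ℝ²) ρ)) :=
    isFiniteMeasure_restrict.2 measure_ball_lt_top.ne
  set a := ⨍ x in ball (0 : ℝ²) ρ, eval (fun j => x j) q
  have hdeg : (q - C a).totalDegree ≤ ℓ + 1 := (totalDegree_sub_C_le q a).trans hq
  have hmean_ball : ∫ x in ball (0 : ℝ²) ρ, eval (fun j => x j) (q - C a) = 0 := by
    simpa using integral_sub_average (volume.restrict (ball (0 : ℝ²) ρ))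
      (fun x : ℝ² => eval (fun j => x j) q)
  calc ∫ x in T, (eval (fun j => x j) q) ^ 2
      ≤ ∫ x in T, (eval (fun j => x j) q - a) ^ 2 :=
        integral_sq_le_integral_sub_const_sq
          ((continuous_eval_euclidean q).memLp_restrict_of_isBounded hT 2) hmean a
    _ ≤ ∫ x in ball (0 : ℝ²) 1, (eval (fun j => x j) (q - C a)) ^ 2 := by
        simp only [map_sub, eval_C]
        exact setIntegral_mono_set
          ((((continuous_eval_euclidean q).sub continuous_const).pow 2).integrableOn_of_isBounded
            isBounded_ball)
          (.of_forall fun x => sq_nonneg _) hT1.eventuallyLE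
    _ ≤ K ^ 2 * ∫ x in ball (0 : ℝ²) ρ, ‖polyGrad2 q x‖ ^ 2 := by
        simpa only [polyGrad2_sub_C] using hball _ hdeg hmean_ball
    _ ≤ K ^ 2 * ∫ x in T, ‖polyGrad2 q x‖ ^ 2 := by
        refine mul_le_mul_of_nonneg_left (setIntegral_mono_set ?_ ?_ hρT.eventuallyLE) (sq_nonneg K)
        · exact ((continuous_polyGrad2 q).norm.pow 2).integrableOn_of_isBounded hT
        · exact .of_forall fun x => sq_nonneg _

/-- Poincaré–Wirtinger inequality for polynomials, uniform over sets sandwiched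
between Euclidean balls: for every `ℓ ≥ 0` and `ρ ∈ (0,1)` there is `C > 0` depending only on `ℓ`
and `ρ` such that for every measurable `T ⊆ ℝ²` with `B(0,ρ) ⊆ T ⊆ B(0,1)` and every polynomial
`q` of total degree `≤ ℓ+1` with `∫_T q = 0`, one has `∫_T q² ≤ C² ∫_T ‖∇q‖²`.
(Normalized form of the estimate `‖(rot-grad)⁻¹‖ ≲ h_F`.) -/
theorem rotgrad_inverse_bound (ℓ : ℕ) (ρ : ℝ) (hρ0 : 0 < ρ) (hρ1 : ρ < 1) :
    ∃ C : ℝ, 0 < C ∧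
      ∀ T : Set (EuclideanSpace ℝ (Fin 2)), MeasurableSet T →
        Metric.ball 0 ρ ⊆ T → T ⊆ Metric.ball 0 1 →
        ∀ q : MvPolynomial (Fin 2) ℝ, q.totalDegree ≤ ℓ + 1 →
          (∫ x in T, eval (fun j => x j) q) = 0 →
          (∫ x in T, (eval (fun j => x j) q) ^ 2) ≤
            C ^ 2 * ∫ x in T, ‖polyGrad2 q x‖ ^ 2 :=
  rotgrad_inverse_bound_general ℓ ρ hρ0
end
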